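/- arXiv:1910.11321 — 3 statements merged into one kernel-verified Lean document; each statement's English description precedes it below -/
import Mathlib

section
/- Fix β ∈ (0,1] and σ ∈ ℝ, and define ι_{β,σ} > 0 by: ι_{β,σ} = 1/β if σ ∈ ℤ; ι_{β,σ} = (σ − ⌊σ⌋)/β if the fractional part σ − ⌊σ⌋ lies in (0, 1/2]; and ι_{β,σ} = (⌊σ⌋ + 1 − σ)/β if σ − ⌊σ⌋ lies in (1/2, 1). Let U : (0,∞) × ℝ → ℂ be smooth, harmonic in the polar sense (∂²U/∂r² + r^{-1}·∂U/∂r + r^{-2}·∂²U/∂θ² = 0), and satisfy the twisted periodicity U(r, θ + 2πβ) = e^{2πiσ}·U(r, θ) for all r > 0 and θ ∈ ℝ. If there exist a constant C > 0 and an exponent μ with 0 < μ < ι_{β,σ} such that |U(r,θ)| ≤ C·r^{−μ} for all r > 0 and θ ∈ ℝ, then U is identically zero. -/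
open Set Filter MeasureTheory intervalIntegral Metric

lemma aux_const {f : ℝ → ℂ} (hf : ∀ x ∈ Set.Ioi (0:ℝ), HasDerivAt f 0 x) {x y : ℝ}
    (hx : 0 < x) (hy : 0 < y) : f x = f y := by
  wlog hxy : x ≤ y generalizing x y
  · exact (this hy hx (le_of_not_ge hxy)).symm
  have hcont : ContinuousOn f (Icc x y) := fun t ht =>
    ((hf t (lt_of_lt_of_le hx ht.1)).continuousAt).continuousWithinAt
  have := constant_of_has_deriv_right_zero hcont (fun t ht =>
    (hf t (lt_of_lt_of_le hx ht.1)).hasDerivWithinAt) y ⟨hxy, le_refl y⟩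
  exact this.symm

lemma aux_anti {f g d : ℝ → ℂ} (hf : ∀ x ∈ Set.Ioi (0:ℝ), HasDerivAt f (d x) x)
    (hg : ∀ x ∈ Set.Ioi (0:ℝ), HasDerivAt g (d x) x) {x y : ℝ}
    (hx : 0 < x) (hy : 0 < y) : f x - g x = f y - g y :=
  aux_const (f := fun t => f t - g t)
    (fun t ht => by have h := (hf t ht).sub (hg t ht); rw [sub_self] at h; exact h) hx hy

lemma fourier_zero_of_coeffs {T : ℝ} [hT : Fact (0 < T)] (f : C(AddCircle T, ℂ))
    (h : ∀ n : ℤ, fourierCoeff (⇑f) n = 0) : ∀ x, f x = 0 := by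
  set fL := ContinuousMap.toLp (E := ℂ) 2 AddCircle.haarAddCircle ℂ f with hfLdef
  have hrepr : fourierBasis.repr fL = 0 := by
    ext n
    rw [fourierBasis_repr, fourierCoeff_toLp, h n]
    rfl
  have hfL : fL = 0 := by
    apply fourierBasis.repr.injective
    simp [hrepr]
  have hae : ⇑f =ᵐ[AddCircle.haarAddCircle] 0 := by
    have h1 : (fL : AddCircle T → ℂ) =ᵐ[AddCircle.haarAddCircle] ⇑f :=
      ContinuousMap.coeFn_toLp _ _
    rw [hfL] at h1
    exact (h1.symm.trans (MeasureTheory.Lp.coeFn_zero _ _ _))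
  have := (f.continuous.ae_eq_iff_eq (μ := AddCircle.haarAddCircle) continuous_const).mp hae
  exact fun x => congrFun this x

lemma slice_cont {F : ℝ×ℝ → ℂ} (h : ContinuousOn F (Set.Ioi 0 ×ˢ Set.univ)) {x : ℝ}
    (hx : 0 < x) : Continuous (fun θ => F (x, θ)) := by
  rw [continuous_iff_continuousAt]
  intro θ
  have hopen : IsOpen (Set.Ioi (0:ℝ) ×ˢ (Set.univ : Set ℝ)) := isOpen_Ioi.prod isOpen_univ
  have hmem : (x, θ) ∈ Set.Ioi (0:ℝ) ×ˢ (Set.univ : Set ℝ) := ⟨hx, Set.mem_univ _⟩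
  exact (h.continuousAt (hopen.mem_nhds hmem)).comp (Continuous.continuousAt (by continuity))

lemma aux_param_deriv {F Fr : ℝ × ℝ → ℂ}
    (hF_cont : ContinuousOn F (Set.Ioi 0 ×ˢ Set.univ))
    (hFr_cont : ContinuousOn Fr (Set.Ioi 0 ×ˢ Set.univ))
    (hder : ∀ t θ : ℝ, 0 < t → HasDerivAt (fun s => F (s, θ)) (Fr (t, θ)) t)
    (a b : ℝ) {r : ℝ} (hr : 0 < r) :
    HasDerivAt (fun t => ∫ θ in a..b, F (t, θ)) (∫ θ in a..b, Fr (r, θ)) r := by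
  have hopen : IsOpen (Set.Ioi (0:ℝ) ×ˢ (Set.univ : Set ℝ)) := isOpen_Ioi.prod isOpen_univ
  -- compact set and bound
  have hKsub : (Set.Icc (r/2) (3*r/2) ×ˢ Set.uIcc a b) ⊆ Set.Ioi (0:ℝ) ×ˢ Set.univ := by
    rintro ⟨x, θ⟩ ⟨hx, -⟩
    exact ⟨lt_of_lt_of_le (by linarith) hx.1, Set.mem_univ _⟩
  have hK : IsCompact (Set.Icc (r/2) (3*r/2) ×ˢ Set.uIcc a b) :=
    isCompact_Icc.prod isCompact_uIcc
  obtain ⟨M, hM⟩ := hK.exists_bound_of_continuousOn (hFr_cont.mono hKsub)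
  refine (intervalIntegral.hasDerivAt_integral_of_dominated_loc_of_deriv_le
    (F := fun x θ => F (x, θ)) (F' := fun x θ => Fr (x, θ)) (bound := fun _ => M)
    (Metric.ball_mem_nhds r (half_pos hr)) ?_ ?_ ?_ ?_ ?_ ?_).2
  · filter_upwards [eventually_gt_nhds hr] with x hx using
      ((slice_cont hF_cont hx).aestronglyMeasurable).restrict
  · exact ((slice_cont hF_cont hr).continuousOn).intervalIntegrable
  · exact ((slice_cont hFr_cont hr).aestronglyMeasurable).restrict
  · refine Filter.Eventually.of_forall (fun θ hθ x hx => ?_)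
    refine hM (x, θ) ⟨?_, Set.uIoc_subset_uIcc hθ⟩
    have := abs_lt.mp (mem_ball_iff_norm.mp hx)
    constructor <;> [linarith [this.1]; linarith [this.2]]
  · exact intervalIntegrable_const
  · refine Filter.Eventually.of_forall (fun θ hθ x hx => ?_)
    have := abs_lt.mp (mem_ball_iff_norm.mp hx)
    exact hder x θ (by linarith [this.1])

lemma hasDerivAt_ofReal_rpow {p r : ℝ} (hr : 0 < r) :
    HasDerivAt (fun x : ℝ => ((x ^ p : ℝ) : ℂ)) ((p * r ^ (p-1) : ℝ) : ℂ) r :=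
  (Real.hasDerivAt_rpow_const (Or.inl hr.ne')).ofReal_comp

lemma ode_pos {g g1 g2 : ℝ → ℂ} {ν : ℝ} (hν : 0 < ν)
    (hg : ∀ r ∈ Set.Ioi (0:ℝ), HasDerivAt g (g1 r) r)
    (hg1 : ∀ r ∈ Set.Ioi (0:ℝ), HasDerivAt g1 (g2 r) r)
    (heq : ∀ r ∈ Set.Ioi (0:ℝ), g2 r + ((r:ℂ))⁻¹ * g1 r
      - ((ν:ℂ))^2 * (((r:ℂ))⁻¹)^2 * g r = 0) :
    ∃ A B : ℂ, ∀ r ∈ Set.Ioi (0:ℝ), g r = A * ((r ^ ν : ℝ) : ℂ) + B * ((r ^ (-ν) : ℝ) : ℂ) := by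
  set Φ : ℝ → ℂ := fun r => ((r^(1+ν):ℝ):ℂ) * g1 r - (ν:ℂ) * (((r^ν:ℝ):ℂ) * g r) with hΦdef
  have hΦ : ∀ r ∈ Set.Ioi (0:ℝ), HasDerivAt Φ 0 r := by
    intro r hr
    have hr' : (0:ℝ) < r := hr
    have hR : ((r:ℝ):ℂ) ≠ 0 := by exact_mod_cast hr'.ne'
    have h1 := ((hasDerivAt_ofReal_rpow (p := 1+ν) hr').mul (hg1 r hr)).sub
      ((((hasDerivAt_ofReal_rpow (p := ν) hr').mul (hg r hr))).const_mul (ν:ℂ))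
    convert h1 using 1
    · rfl
    · rfl
    have e1 : (1 + ν - 1) = ν := by ring
    have e2 : r ^ (1+ν) = r * r ^ ν := by
      rw [Real.rpow_add hr', Real.rpow_one]
    have e3 : r ^ (ν - 1) = r ^ ν / r := by
      rw [Real.rpow_sub hr', Real.rpow_one]
    rw [e1, e2, e3]
    have heq' := heq r hr
    have hg2 : g2 r = ((ν:ℂ))^2 * (((r:ℂ))⁻¹)^2 * g r - ((r:ℂ))⁻¹ * g1 r := by
      linear_combination heq'
    rw [hg2]
    push_cast
    field_simp
    ring
  obtain ⟨c, hΦc⟩ : ∃ c : ℂ, ∀ r ∈ Set.Ioi (0:ℝ), Φ r = c :=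
    ⟨Φ 1, fun r hr => aux_const hΦ hr one_pos⟩
  -- Ψ = r^{-ν} g, has derivative c * r^{-1-2ν}
  set Ψ : ℝ → ℂ := fun r => ((r^(-ν):ℝ):ℂ) * g r with hΨdef
  have hΨ : ∀ r ∈ Set.Ioi (0:ℝ), HasDerivAt Ψ (c * ((r^(-1-2*ν):ℝ):ℂ)) r := by
    intro r hr
    have hr' : (0:ℝ) < r := hr
    have hR : ((r:ℝ):ℂ) ≠ 0 := by exact_mod_cast hr'.ne'
    have hY : ((r ^ ν : ℝ) : ℂ) ≠ 0 := by
      exact_mod_cast (Real.rpow_pos_of_pos hr' ν).ne'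
    have h1 := (hasDerivAt_ofReal_rpow (p := -ν) hr').mul (hg r hr)
    convert h1 using 1
    · rfl
    · rfl
    have e1 : r ^ (-ν - 1) = (r ^ ν)⁻¹ / r := by
      rw [show -ν - 1 = -ν + (-1) by ring, Real.rpow_add hr', Real.rpow_neg_one,
        Real.rpow_neg hr'.le]
      ring
    have e2 : r ^ (-1 - 2*ν) = (r^ν)⁻¹ * (r^ν)⁻¹ / r := by
      rw [show -1 - 2*ν = -ν + (-ν + (-1)) by ring, Real.rpow_add hr', Real.rpow_add hr',
        Real.rpow_neg_one, Real.rpow_neg hr'.le]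
      ring
    have e3 : r ^ (-ν) = (r^ν)⁻¹ := Real.rpow_neg hr'.le ν
    have hc' : ((r^(1+ν):ℝ):ℂ) * g1 r - (ν:ℂ) * (((r^ν:ℝ):ℂ) * g r) = c := hΦc r hr
    have e4 : r ^ (1+ν) = r * r ^ ν := by rw [Real.rpow_add hr', Real.rpow_one]
    rw [e4] at hc'
    push_cast at hc'
    rw [e1, e2, e3]
    push_cast
    field_simp
    linear_combination (-1 : ℂ) * hc'
  set X : ℝ → ℂ := fun r => c * ((r^(-2*ν):ℝ):ℂ) / ((-2*ν:ℝ):ℂ) with hXdef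
  have hX : ∀ r ∈ Set.Ioi (0:ℝ), HasDerivAt X (c * ((r^(-1-2*ν):ℝ):ℂ)) r := by
    intro r hr
    have hr' : (0:ℝ) < r := hr
    have h1 := ((hasDerivAt_ofReal_rpow (p := -2*ν) hr').const_mul c).div_const ((-2*ν:ℝ):ℂ)
    convert h1 using 1
    · rfl
    have hνC : ((ν:ℝ):ℂ) ≠ 0 := by exact_mod_cast hν.ne'
    rw [show -2*ν - 1 = -1 - 2*ν by ring]
    push_cast
    field_simp
  obtain ⟨A, hA⟩ : ∃ A : ℂ, ∀ r ∈ Set.Ioi (0:ℝ), Ψ r - X r = A :=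
    ⟨Ψ 1 - X 1, fun r hr => aux_anti hΨ hX hr one_pos⟩
  refine ⟨A, c / ((-2*ν:ℝ):ℂ), fun r hr => ?_⟩
  have hr' : (0:ℝ) < r := hr
  have hone : ((r^(-ν):ℝ):ℂ) * ((r^ν:ℝ):ℂ) = 1 := by
    rw [← Complex.ofReal_mul, ← Real.rpow_add hr']
    norm_num
  have h2 : ((r^(-2*ν):ℝ):ℂ) * ((r^ν:ℝ):ℂ) = ((r^(-ν):ℝ):ℂ) := by
    rw [← Complex.ofReal_mul, ← Real.rpow_add hr']
    norm_num
    rw [show -(2*ν)+ν = -ν by ring]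
  have h3 := hA r hr
  have h4 : Ψ r = A + X r := by linear_combination h3
  have h5 : ((r^(-ν):ℝ):ℂ) * g r = A + c * ((r^(-2*ν):ℝ):ℂ) / ((-2*ν:ℝ):ℂ) := h4
  calc g r = (((r^(-ν):ℝ):ℂ) * g r) * ((r^ν:ℝ):ℂ) := by
        rw [mul_comm (((r^(-ν):ℝ):ℂ)) (g r), mul_assoc, hone, mul_one]
    _ = A * ((r ^ ν : ℝ) : ℂ) + c / ((-2*ν:ℝ):ℂ) * ((r ^ (-ν) : ℝ) : ℂ) := by
        rw [h5]
        rw [add_mul]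
        congr 1
        rw [div_mul_eq_mul_div, mul_assoc, h2, mul_div_assoc]
        ring

lemma aux_const' {f : ℝ → ℂ} (hf : ∀ x ∈ Set.Ioi (0:ℝ), HasDerivAt f 0 x) {x y : ℝ}
    (hx : 0 < x) (hy : 0 < y) : f x = f y := by
  wlog hxy : x ≤ y generalizing x y
  · exact (this hy hx (le_of_not_ge hxy)).symm
  have hcont : ContinuousOn f (Icc x y) := fun t ht =>
    ((hf t (lt_of_lt_of_le hx ht.1)).continuousAt).continuousWithinAt
  exact (constant_of_has_deriv_right_zero hcont (fun t ht =>
    (hf t (lt_of_lt_of_le hx ht.1)).hasDerivWithinAt) y ⟨hxy, le_refl y⟩).symm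

lemma aux_anti' {f g d : ℝ → ℂ} (hf : ∀ x ∈ Set.Ioi (0:ℝ), HasDerivAt f (d x) x)
    (hg : ∀ x ∈ Set.Ioi (0:ℝ), HasDerivAt g (d x) x) {x y : ℝ}
    (hx : 0 < x) (hy : 0 < y) : f x - g x = f y - g y :=
  aux_const' (f := fun t => f t - g t)
    (fun t ht => by have h := (hf t ht).sub (hg t ht); rw [sub_self] at h; exact h) hx hy

lemma norm_ofReal_pos {x : ℝ} (hx : 0 < x) : ‖((x:ℝ):ℂ)‖ = x := by
  rw [Complex.norm_real, Real.norm_eq_abs]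
  exact abs_of_pos hx

lemma ode_zero {g g1 g2 : ℝ → ℂ}
    (hg : ∀ r ∈ Set.Ioi (0:ℝ), HasDerivAt g (g1 r) r)
    (hg1 : ∀ r ∈ Set.Ioi (0:ℝ), HasDerivAt g1 (g2 r) r)
    (heq : ∀ r ∈ Set.Ioi (0:ℝ), g2 r + ((r:ℂ))⁻¹ * g1 r = 0) :
    ∃ A c : ℂ, ∀ r ∈ Set.Ioi (0:ℝ), g r = A + c * ((Real.log r : ℝ) : ℂ) := by
  set Φ : ℝ → ℂ := fun r => ((r:ℝ):ℂ) * g1 r with hΦdef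
  have hΦ : ∀ r ∈ Set.Ioi (0:ℝ), HasDerivAt Φ 0 r := by
    intro r hr
    have hr' : (0:ℝ) < r := hr
    have hR : ((r:ℝ):ℂ) ≠ 0 := by exact_mod_cast hr'.ne'
    have h1 := ((hasDerivAt_id r).ofReal_comp).mul (hg1 r hr)
    convert h1 using 1
    · rfl
    · rfl
    have h2 := heq r hr
    have hg2 : g2 r = -(((r:ℂ))⁻¹ * g1 r) := by linear_combination h2
    rw [hg2]
    field_simp
    ring
    simp only [id, Complex.ofReal_one]
    ring
  obtain ⟨c, hΦc⟩ : ∃ c : ℂ, ∀ r ∈ Set.Ioi (0:ℝ), Φ r = c :=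
    ⟨Φ 1, fun r hr => aux_const' hΦ hr one_pos⟩
  set X : ℝ → ℂ := fun r => c * ((Real.log r : ℝ) : ℂ) with hXdef
  have hgd : ∀ r ∈ Set.Ioi (0:ℝ), HasDerivAt g (c * (((r⁻¹:ℝ)):ℂ)) r := by
    intro r hr
    have hr' : (0:ℝ) < r := hr
    have hR : ((r:ℝ):ℂ) ≠ 0 := by exact_mod_cast hr'.ne'
    convert hg r hr using 1
    have h2 := hΦc r hr
    have : ((r:ℝ):ℂ) * g1 r = c := h2
    push_cast
    field_simp
    linear_combination -this
  have hXd : ∀ r ∈ Set.Ioi (0:ℝ), HasDerivAt X (c * (((r⁻¹:ℝ)):ℂ)) r := by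
    intro r hr
    have hr' : (0:ℝ) < r := hr
    exact ((Real.hasDerivAt_log hr'.ne').ofReal_comp).const_mul c
  obtain ⟨A, hA⟩ : ∃ A : ℂ, ∀ r ∈ Set.Ioi (0:ℝ), g r - X r = A :=
    ⟨g 1 - X 1, fun r hr => aux_anti' hgd hXd hr one_pos⟩
  exact ⟨A, c, fun r hr => by linear_combination hA r hr⟩

lemma rpow_tendsto_zero {p : ℝ} (hp : 0 < p) :
    Tendsto (fun r : ℝ => r ^ p) (nhdsWithin 0 (Set.Ioi 0)) (nhds 0) := by
  have h1 : ContinuousAt (fun x : ℝ => x ^ p) 0 :=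
    Real.continuousAt_rpow_const 0 p (Or.inr hp.le)
  have h2 : Tendsto (fun x : ℝ => x ^ p) (nhds 0) (nhds ((0:ℝ) ^ p)) := h1.tendsto
  rw [Real.zero_rpow hp.ne'] at h2
  exact h2.mono_left nhdsWithin_le_nhds

lemma kill_pos {A B : ℂ} {ν μ C' : ℝ} (hμ : 0 < μ) (hμν : μ < ν)
    (hb : ∀ r : ℝ, 0 < r → ‖A * ((r^ν:ℝ):ℂ) + B * ((r^(-ν):ℝ):ℂ)‖ ≤ C' * r^(-μ)) :
    A = 0 ∧ B = 0 := by
  have hν : 0 < ν := hμ.trans hμν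
  have hC'0 : 0 ≤ C' := by
    have := hb 1 one_pos
    have h1 : (0:ℝ) ≤ C' * (1:ℝ)^(-μ) := le_trans (norm_nonneg _) this
    simpa using h1
  have hA : A = 0 := by
    have hbound : ∀ r : ℝ, 0 < r → ‖A‖ ≤ C' * r^(-μ-ν) + ‖B‖ * r^(-2*ν) := by
      intro r hr
      have hx : ((r^(-ν):ℝ):ℂ) * ((r^ν:ℝ):ℂ) = 1 := by
        rw [← Complex.ofReal_mul, ← Real.rpow_add hr]
        norm_num
      have hx2 : ((r^(-ν):ℝ):ℂ) * ((r^(-ν):ℝ):ℂ) = ((r^(-2*ν):ℝ):ℂ) := by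
        rw [← Complex.ofReal_mul, ← Real.rpow_add hr]
        rw [show -ν + -ν = -2*ν by ring]
      have hid : A = (A * ((r^ν:ℝ):ℂ) + B * ((r^(-ν):ℝ):ℂ)) * ((r^(-ν):ℝ):ℂ)
          - B * ((r^(-2*ν):ℝ):ℂ) := by
        rw [add_mul, mul_assoc, mul_comm (((r^ν:ℝ):ℂ)) (((r^(-ν):ℝ):ℂ)), hx, mul_one,
          mul_assoc, hx2]
        ring
      calc ‖A‖ ≤ ‖(A * ((r^ν:ℝ):ℂ) + B * ((r^(-ν):ℝ):ℂ)) * ((r^(-ν):ℝ):ℂ)‖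
            + ‖B * ((r^(-2*ν):ℝ):ℂ)‖ := by
              conv_lhs => rw [hid]
              exact norm_sub_le _ _
        _ ≤ C' * r^(-μ) * r^(-ν) + ‖B‖ * r^(-2*ν) := by
            rw [norm_mul, norm_mul, norm_ofReal_pos (Real.rpow_pos_of_pos hr (-ν)),
              norm_ofReal_pos (Real.rpow_pos_of_pos hr (-2*ν))]
            have h5 := mul_le_mul_of_nonneg_right (hb r hr)
              (Real.rpow_pos_of_pos hr (-ν)).le
            linarith
        _ = C' * r^(-μ-ν) + ‖B‖ * r^(-2*ν) := by
            rw [mul_assoc, ← Real.rpow_add hr]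
            ring_nf
    have htend : Tendsto (fun r : ℝ => C' * r^(-μ-ν) + ‖B‖ * r^(-2*ν)) atTop (nhds 0) := by
      have h1 := (tendsto_rpow_neg_atTop (by linarith : (0:ℝ) < μ + ν)).const_mul C'
      have h2 := (tendsto_rpow_neg_atTop (by linarith : (0:ℝ) < 2*ν)).const_mul ‖B‖
      have := h1.add h2
      simpa [show -(μ+ν) = -μ-ν by ring] using this
    have : ‖A‖ ≤ 0 := ge_of_tendsto htend
      ((eventually_gt_atTop 0).mono (fun r hr => hbound r hr))
    simpa using le_antisymm this (norm_nonneg A)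
  refine ⟨hA, ?_⟩
  have hbound : ∀ r : ℝ, 0 < r → ‖B‖ ≤ C' * r^(ν-μ) := by
    intro r hr
    have hx : ((r^(-ν):ℝ):ℂ) * ((r^ν:ℝ):ℂ) = 1 := by
      rw [← Complex.ofReal_mul, ← Real.rpow_add hr]
      norm_num
    have hid : B = (A * ((r^ν:ℝ):ℂ) + B * ((r^(-ν):ℝ):ℂ)) * ((r^ν:ℝ):ℂ) := by
      rw [hA, zero_mul, zero_add, mul_assoc, hx, mul_one]
    calc ‖B‖ = ‖A * ((r^ν:ℝ):ℂ) + B * ((r^(-ν):ℝ):ℂ)‖ * ‖((r^ν:ℝ):ℂ)‖ := by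
          conv_lhs => rw [hid]
          rw [norm_mul]
      _ ≤ (C' * r^(-μ)) * r^ν := by
          rw [norm_ofReal_pos (Real.rpow_pos_of_pos hr ν)]
          exact mul_le_mul_of_nonneg_right (hb r hr) (Real.rpow_pos_of_pos hr ν).le
      _ = C' * r^(ν-μ) := by
          rw [mul_assoc, ← Real.rpow_add hr]
          ring_nf
  have htend : Tendsto (fun r : ℝ => C' * r^(ν-μ)) (nhdsWithin 0 (Set.Ioi 0)) (nhds 0) := by
    have := (rpow_tendsto_zero (by linarith : (0:ℝ) < ν - μ)).const_mul C'
    simpa using this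
  have : ‖B‖ ≤ 0 := ge_of_tendsto htend
    (eventually_nhdsWithin_of_forall (fun r hr => hbound r hr))
  simpa using le_antisymm this (norm_nonneg B)

lemma kill_zero {A c : ℂ} {μ C' : ℝ} (hμ : 0 < μ)
    (hb : ∀ r : ℝ, 0 < r → ‖A + c * ((Real.log r : ℝ) : ℂ)‖ ≤ C' * r^(-μ)) :
    A = 0 ∧ c = 0 := by
  have hc : c = 0 := by
    have hbound : ∀ r : ℝ, 1 < r → ‖c‖ ≤ (C' * r^(-μ) + ‖A‖) * (Real.log r)⁻¹ := by
      intro r hr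
      have hlog : 0 < Real.log r := Real.log_pos hr
      have h1 : ‖c * ((Real.log r : ℝ) : ℂ)‖ = ‖c‖ * Real.log r := by
        rw [norm_mul, norm_ofReal_pos hlog]
      have h2 : ‖c‖ * Real.log r ≤ C' * r^(-μ) + ‖A‖ := by
        calc ‖c‖ * Real.log r = ‖c * ((Real.log r : ℝ) : ℂ)‖ := h1.symm
          _ = ‖(A + c * ((Real.log r : ℝ) : ℂ)) - A‖ := by
              rw [add_sub_cancel_left]
          _ ≤ ‖A + c * ((Real.log r : ℝ) : ℂ)‖ + ‖A‖ := norm_sub_le _ _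
          _ ≤ C' * r^(-μ) + ‖A‖ := by
              have := hb r (lt_trans one_pos hr)
              linarith
      rw [← le_div_iff₀ hlog] at h2
      rw [div_eq_mul_inv] at h2
      linarith
    have htend : Tendsto (fun r : ℝ => (C' * r^(-μ) + ‖A‖) * (Real.log r)⁻¹) atTop (nhds 0) := by
      have h1 : Tendsto (fun r : ℝ => C' * r^(-μ) + ‖A‖) atTop (nhds (C' * 0 + ‖A‖)) :=
        ((tendsto_rpow_neg_atTop hμ).const_mul C').add tendsto_const_nhds
      have h2 : Tendsto (fun r : ℝ => (Real.log r)⁻¹) atTop (nhds 0) :=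
        Real.tendsto_log_atTop.inv_tendsto_atTop
      have := h1.mul h2
      simpa using this
    have : ‖c‖ ≤ 0 := ge_of_tendsto htend
      ((eventually_gt_atTop 1).mono (fun r hr => hbound r hr))
    simpa using le_antisymm this (norm_nonneg c)
  refine ⟨?_, hc⟩
  have hbound : ∀ r : ℝ, 0 < r → ‖A‖ ≤ C' * r^(-μ) := by
    intro r hr
    have := hb r hr
    rw [hc] at this
    simpa using this
  have htend : Tendsto (fun r : ℝ => C' * r^(-μ)) atTop (nhds 0) := by
    simpa using (tendsto_rpow_neg_atTop hμ).const_mul C'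
  have : ‖A‖ ≤ 0 := ge_of_tendsto htend
    ((eventually_gt_atTop 0).mono (fun r hr => hbound r hr))
  simpa using le_antisymm this (norm_nonneg A)

lemma lam_min {β σ ι : ℝ} (hβ : β ∈ Set.Ioc (0 : ℝ) 1)
    (hι_int : (∃ k : ℤ, σ = (k : ℝ)) → ι = 1 / β)
    (hι_low : σ - (⌊σ⌋ : ℝ) ∈ Set.Ioc (0 : ℝ) (1 / 2) → ι = (σ - (⌊σ⌋ : ℝ)) / β)
    (hι_high : σ - (⌊σ⌋ : ℝ) ∈ Set.Ioo (1 / 2 : ℝ) 1 → ι = ((⌊σ⌋ : ℝ) + 1 - σ) / β) :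
    ∀ n : ℤ, ((n:ℝ) + σ) / β = 0 ∨ ι ≤ |((n:ℝ) + σ) / β| := by
  intro n
  have hβ0 : 0 < β := hβ.1
  set σ' : ℝ := σ - (⌊σ⌋ : ℝ) with hσ'def
  have hσ'0 : 0 ≤ σ' := sub_nonneg.mpr (Int.floor_le σ)
  have hσ'1 : σ' < 1 := by
    have := Int.lt_floor_add_one σ
    simp only [hσ'def]
    linarith
  set m : ℤ := n + ⌊σ⌋ with hmdef
  have hns : (n:ℝ) + σ = (m:ℝ) + σ' := by
    simp only [hmdef, hσ'def]
    push_cast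
    ring
  have habs : |((n:ℝ) + σ) / β| = |(m:ℝ) + σ'| / β := by
    rw [abs_div, abs_of_pos hβ0, hns]
  have hmcase : (0:ℝ) ≤ (m:ℝ) ∨ (m:ℝ) ≤ -1 := by
    rcases le_or_gt 0 m with h | h
    · exact Or.inl (by exact_mod_cast h)
    · refine Or.inr ?_
      have h2 : m ≤ -1 := by omega
      exact_mod_cast h2
  rcases eq_or_lt_of_le hσ'0 with hz | hpos
  · -- σ' = 0, σ is an integer
    have hι := hι_int ⟨⌊σ⌋, by have h := hσ'def; linarith⟩
    rcases eq_or_ne m 0 with hm0 | hm0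
    · left
      rw [hns, hm0, ← hz]
      simp
    · right
      rw [habs, hι, ← hz, add_zero]
      have h1 : (1:ℝ) ≤ |(m:ℝ)| := by
        have := Int.one_le_abs hm0
        calc (1:ℝ) = ((1:ℤ):ℝ) := by norm_num
          _ ≤ ((|m|:ℤ):ℝ) := by exact_mod_cast this
          _ = |(m:ℝ)| := by push_cast; ring
      exact (div_le_div_iff_of_pos_right hβ0).mpr h1
  · rcases le_or_gt σ' (1/2) with hle | hgt
    · -- low case
      have hι := hι_low ⟨hpos, hle⟩
      right
      rw [habs, hι]
      have hnum : σ' ≤ |(m:ℝ) + σ'| := by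
        rcases hmcase with h | h
        · rw [abs_of_pos (by linarith)]
          linarith
        · rw [abs_of_neg (by linarith)]
          linarith
      exact (div_le_div_iff_of_pos_right hβ0).mpr hnum
    · -- high case
      have hι := hι_high ⟨hgt, hσ'1⟩
      right
      have hισ : ι = (1 - σ') / β := by
        rw [hι, hσ'def]
        ring_nf
      rw [habs, hισ]
      have hnum : 1 - σ' ≤ |(m:ℝ) + σ'| := by
        rcases hmcase with h | h
        · rw [abs_of_pos (by linarith)]
          linarith
        · rw [abs_of_neg (by linarith)]
          linarith
      exact (div_le_div_iff_of_pos_right hβ0).mpr hnum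

lemma contDiffOn_partial {F : ℝ×ℝ → ℂ} (hF : ContDiffOn ℝ (⊤ : ℕ∞) F (Set.Ioi 0 ×ˢ Set.univ))
    (v : ℝ×ℝ) : ContDiffOn ℝ (⊤ : ℕ∞) (fun p => fderiv ℝ F p v) (Set.Ioi 0 ×ˢ Set.univ) := by
  have hopen : IsOpen (Set.Ioi (0:ℝ) ×ˢ (Set.univ : Set ℝ)) := isOpen_Ioi.prod isOpen_univ
  have h1 : ContDiffOn ℝ (⊤ : ℕ∞) (fun p => fderiv ℝ F p) (Set.Ioi 0 ×ˢ Set.univ) :=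
    hF.fderiv_of_isOpen hopen (by simp)
  exact (ContinuousLinearMap.apply ℝ ℂ v).contDiff.comp_contDiffOn h1

lemma hasDerivAt_slice_fst {F : ℝ×ℝ → ℂ} (hF : ContDiffOn ℝ (⊤ : ℕ∞) F (Set.Ioi 0 ×ˢ Set.univ))
    {x θ : ℝ} (hx : 0 < x) :
    HasDerivAt (fun t => F (t, θ)) (fderiv ℝ F (x,θ) (1,0)) x := by
  have hopen : IsOpen (Set.Ioi (0:ℝ) ×ˢ (Set.univ : Set ℝ)) := isOpen_Ioi.prod isOpen_univ
  have hdiff : DifferentiableAt ℝ F (x,θ) :=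
    (hF.differentiableOn (by simp)).differentiableAt (hopen.mem_nhds ⟨hx, Set.mem_univ _⟩)
  have hline : HasDerivAt (fun t : ℝ => ((t, θ) : ℝ×ℝ)) (((1:ℝ), (0:ℝ)) : ℝ×ℝ) x :=
    (hasDerivAt_id x).prodMk (hasDerivAt_const x θ)
  exact hdiff.hasFDerivAt.comp_hasDerivAt x hline

lemma hasDerivAt_slice_snd {F : ℝ×ℝ → ℂ} (hF : ContDiffOn ℝ (⊤ : ℕ∞) F (Set.Ioi 0 ×ˢ Set.univ))
    {x θ : ℝ} (hx : 0 < x) :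
    HasDerivAt (fun t => F (x, t)) (fderiv ℝ F (x,θ) (0,1)) θ := by
  have hopen : IsOpen (Set.Ioi (0:ℝ) ×ˢ (Set.univ : Set ℝ)) := isOpen_Ioi.prod isOpen_univ
  have hdiff : DifferentiableAt ℝ F (x,θ) :=
    (hF.differentiableOn (by simp)).differentiableAt (hopen.mem_nhds ⟨hx, Set.mem_univ _⟩)
  have hline : HasDerivAt (fun t : ℝ => ((x, t) : ℝ×ℝ)) (((0:ℝ), (1:ℝ)) : ℝ×ℝ) θ :=
    (hasDerivAt_const θ x).prodMk (hasDerivAt_id θ)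
  exact hdiff.hasFDerivAt.comp_hasDerivAt θ hline

lemma deriv2_eq {f g h : ℝ → ℂ} {s : Set ℝ} (hs : IsOpen s) {x : ℝ} (hx : x ∈ s)
    (h1 : ∀ t ∈ s, HasDerivAt f (g t) t) (h2 : ∀ t ∈ s, HasDerivAt g (h t) t) :
    iteratedDeriv 2 f x = h x := by
  rw [show (2:ℕ) = 1 + 1 from rfl, iteratedDeriv_succ, iteratedDeriv_one]
  have hev : deriv f =ᶠ[nhds x] g := by
    filter_upwards [hs.mem_nhds hx] with t ht using (h1 t ht).deriv
  rw [hev.deriv_eq]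
  exact (h2 x hx).deriv

/-- **Liouville theorem on flat sectors.** Fix β ∈ (0,1], σ ∈ ℝ and let
ι_{β,σ} be 1/β if σ ∈ ℤ, (σ−⌊σ⌋)/β if the fractional part lies in (0,1/2], and
(⌊σ⌋+1−σ)/β if it lies in (1/2,1). If U is smooth on (0,∞) × ℝ, harmonic in the polar
sense, twisted periodic with phase e^{2πiσ} and period 2πβ, and satisfies
|U(r,θ)| ≤ C·r^{−μ} for some C > 0 and 0 < μ < ι_{β,σ}, then U ≡ 0. -/
theorem stmt_5 (β σ : ℝ) (hβ : β ∈ Set.Ioc (0 : ℝ) 1)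
    (ι : ℝ)
    (hι_int : (∃ k : ℤ, σ = (k : ℝ)) → ι = 1 / β)
    (hι_low : σ - (⌊σ⌋ : ℝ) ∈ Set.Ioc (0 : ℝ) (1 / 2) → ι = (σ - (⌊σ⌋ : ℝ)) / β)
    (hι_high : σ - (⌊σ⌋ : ℝ) ∈ Set.Ioo (1 / 2 : ℝ) 1 → ι = ((⌊σ⌋ : ℝ) + 1 - σ) / β)
    (U : ℝ × ℝ → ℂ)
    (hU : ContDiffOn ℝ (⊤ : ℕ∞) U (Set.Ioi (0 : ℝ) ×ˢ Set.univ))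
    (hharm : ∀ r : ℝ, 0 < r → ∀ θ : ℝ,
      iteratedDeriv 2 (fun t => U (t, θ)) r + ((r : ℂ))⁻¹ * deriv (fun t => U (t, θ)) r +
        ((r : ℂ))⁻¹ ^ 2 * iteratedDeriv 2 (fun t => U (r, t)) θ = 0)
    (hper : ∀ r θ : ℝ, 0 < r →
      U (r, θ + 2 * Real.pi * β) =
        Complex.exp (2 * (Real.pi : ℂ) * Complex.I * (σ : ℂ)) * U (r, θ))
    (C : ℝ) (hC : 0 < C) (μ : ℝ) (hμ0 : 0 < μ) (hμι : μ < ι)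
    (hbound : ∀ r θ : ℝ, 0 < r → ‖U (r, θ)‖ ≤ C * r ^ (-μ)) :
    ∀ r θ : ℝ, 0 < r → U (r, θ) = 0 := by
  have hβ0 : 0 < β := hβ.1
  have hπ : 0 < Real.pi := Real.pi_pos
  set T : ℝ := 2 * Real.pi * β with hTdef
  have hT : 0 < T := by positivity
  have hopen : IsOpen (Set.Ioi (0:ℝ) ×ˢ (Set.univ : Set ℝ)) := isOpen_Ioi.prod isOpen_univ
  set c : ℂ := Complex.exp (2 * (Real.pi : ℂ) * Complex.I * (σ : ℂ)) with hcdef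
  set Ur : ℝ×ℝ → ℂ := fun p => fderiv ℝ U p (1,0) with hUrdef
  set Uθ : ℝ×ℝ → ℂ := fun p => fderiv ℝ U p (0,1) with hUθdef
  set Urr : ℝ×ℝ → ℂ := fun p => fderiv ℝ Ur p (1,0) with hUrrdef
  set Uθθ : ℝ×ℝ → ℂ := fun p => fderiv ℝ Uθ p (0,1) with hUθθdef
  have hUrC : ContDiffOn ℝ (⊤ : ℕ∞) Ur (Set.Ioi 0 ×ˢ Set.univ) := contDiffOn_partial hU _
  have hUθC : ContDiffOn ℝ (⊤ : ℕ∞) Uθ (Set.Ioi 0 ×ˢ Set.univ) := contDiffOn_partial hU _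
  have hUrrC : ContDiffOn ℝ (⊤ : ℕ∞) Urr (Set.Ioi 0 ×ˢ Set.univ) := contDiffOn_partial hUrC _
  have hUθθC : ContDiffOn ℝ (⊤ : ℕ∞) Uθθ (Set.Ioi 0 ×ˢ Set.univ) := contDiffOn_partial hUθC _
  have dU1 : ∀ x t : ℝ, 0 < x → HasDerivAt (fun s => U (s, t)) (Ur (x, t)) x :=
    fun x t hx => hasDerivAt_slice_fst hU hx
  have dU2 : ∀ x t : ℝ, 0 < x → HasDerivAt (fun s => Ur (s, t)) (Urr (x, t)) x :=
    fun x t hx => hasDerivAt_slice_fst hUrC hx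
  have dU3 : ∀ x t : ℝ, 0 < x → HasDerivAt (fun s => U (x, s)) (Uθ (x, t)) t :=
    fun x t hx => hasDerivAt_slice_snd hU hx
  have dU4 : ∀ x t : ℝ, 0 < x → HasDerivAt (fun s => Uθ (x, s)) (Uθθ (x, t)) t :=
    fun x t hx => hasDerivAt_slice_snd hUθC hx
  have hPDE : ∀ x t : ℝ, 0 < x →
      Urr (x, t) + ((x:ℂ))⁻¹ * Ur (x, t) + (((x:ℂ))⁻¹) ^ 2 * Uθθ (x, t) = 0 := by
    intro x t hx
    have h := hharm x hx t
    have e1 : iteratedDeriv 2 (fun s => U (s, t)) x = Urr (x, t) :=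
      deriv2_eq isOpen_Ioi hx (fun s hs => dU1 s t hs) (fun s hs => dU2 s t hs)
    have e2 : deriv (fun s => U (s, t)) x = Ur (x, t) := (dU1 x t hx).deriv
    have e3 : iteratedDeriv 2 (fun s => U (x, s)) t = Uθθ (x, t) :=
      deriv2_eq isOpen_univ (Set.mem_univ t) (fun s _ => dU3 x s hx) (fun s _ => dU4 x s hx)
    rw [e1, e2, e3] at h
    exact h
  have hperθ : ∀ x t : ℝ, 0 < x → Uθ (x, t + T) = c * Uθ (x, t) := by
    intro x t hx
    have h1 : HasDerivAt (fun s => U (x, s + T)) (Uθ (x, t + T)) t :=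
      HasDerivAt.comp_add_const t T (dU3 x (t + T) hx)
    have h2 : HasDerivAt (fun s => c * U (x, s)) (c * Uθ (x, t)) t :=
      (dU3 x t hx).const_mul c
    have hfe : (fun s => U (x, s + T)) = fun s => c * U (x, s) :=
      funext (fun s => hper x s hx)
    rw [hfe] at h1
    exact h1.unique h2
  -- main step : all twisted Fourier coefficients vanish
  have key : ∀ n : ℤ, ∀ t : ℝ, 0 < t →
      (∫ x in (0:ℝ)..T, U (t, x) *
        Complex.exp (-(((((n:ℝ) + σ)/β : ℝ)):ℂ) * (x:ℂ) * Complex.I)) = 0 := by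
    intro n
    set lam : ℝ := ((n:ℝ) + σ)/β with hlamdef
    set k : ℂ := -((lam:ℝ):ℂ) * Complex.I with hkdef
    set E : ℝ → ℂ := fun x => Complex.exp (k * (x:ℂ)) with hEdef
    have hEeq : ∀ x : ℝ, Complex.exp (-((lam:ℝ):ℂ) * (x:ℂ) * Complex.I) = E x := by
      intro x
      rw [hEdef]
      congr 1
      rw [hkdef]
      ring
    have hE' : ∀ x : ℝ, HasDerivAt E (k * E x) x := by
      intro x
      have h1 : HasDerivAt (fun s : ℝ => k * (s:ℂ)) k x := by
        simpa using ((hasDerivAt_id x).ofReal_comp).const_mul k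
      have := h1.cexp
      simpa [hEdef, mul_comm] using this
    have hEcont : Continuous E := by
      rw [hEdef]
      exact Complex.continuous_exp.comp (continuous_const.mul Complex.continuous_ofReal)
    have hEnorm : ∀ x : ℝ, ‖E x‖ = 1 := by
      intro x
      rw [hEdef, Complex.norm_exp]
      have h0 : (k * (x:ℂ)).re = 0 := by
        rw [hkdef]
        simp [Complex.mul_re]
      rw [h0, Real.exp_zero]
    have hE0 : E 0 = 1 := by
      rw [hEdef]
      simp
    have hcET : c * E T = 1 := by
      have hlamT : lam * T = 2 * Real.pi * ((n:ℝ) + σ) := by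
        rw [hlamdef, hTdef]
        field_simp
      have h2 : ((lam:ℝ):ℂ) * ((T:ℝ):ℂ) = 2*(Real.pi:ℂ)*((n:ℂ)+(σ:ℂ)) := by
        have h := congrArg (Complex.ofReal) hlamT
        push_cast at h
        exact h
      rw [hcdef, hEdef, ← Complex.exp_add]
      have h3 : 2 * (Real.pi:ℂ) * Complex.I * (σ:ℂ) + k * ((T:ℝ):ℂ)
          = ((-n : ℤ):ℂ) * (2 * (Real.pi:ℂ) * Complex.I) := by
        rw [hkdef]
        push_cast
        linear_combination (-Complex.I) * h2
      rw [h3, Complex.exp_int_mul_two_pi_mul_I]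
    have hint1 : ∀ (W : ℝ×ℝ → ℂ), ContinuousOn W (Set.Ioi 0 ×ˢ Set.univ) → ∀ t : ℝ, 0 < t →
        IntervalIntegrable (fun x => W (t,x) * E x) MeasureTheory.volume 0 T := by
      intro W hW t ht
      exact ((slice_cont hW ht).mul hEcont).intervalIntegrable 0 T
    have hint2 : ∀ (W : ℝ×ℝ → ℂ), ContinuousOn W (Set.Ioi 0 ×ˢ Set.univ) → ∀ t : ℝ, 0 < t →
        IntervalIntegrable (fun x => W (t,x) * (k * E x)) MeasureTheory.volume 0 T := by
      intro W hW t ht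
      exact ((slice_cont hW ht).mul (continuous_const.mul hEcont)).intervalIntegrable 0 T
    have hIBP : ∀ (W Wθ : ℝ×ℝ → ℂ), ContinuousOn W (Set.Ioi 0 ×ˢ Set.univ) →
        ContinuousOn Wθ (Set.Ioi 0 ×ˢ Set.univ) →
        (∀ x s : ℝ, 0 < x → HasDerivAt (fun y => W (x, y)) (Wθ (x, s)) s) →
        (∀ x : ℝ, 0 < x → W (x, T) * E T = W (x, 0) * E 0) →
        ∀ t : ℝ, 0 < t →
        (∫ x in (0:ℝ)..T, Wθ (t,x) * E x) = -(k * ∫ x in (0:ℝ)..T, W (t,x) * E x) := by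
      intro W Wθ hWc hWθc hWd hWbc t ht
      have h1 := intervalIntegral.integral_deriv_mul_eq_sub_of_hasDerivAt
        (u := fun x => W (t,x)) (v := E) (u' := fun x => Wθ (t,x)) (v' := fun x => k * E x)
        (a := 0) (b := T)
        ((slice_cont hWc ht).continuousOn) (hEcont.continuousOn)
        (fun x _ => hWd t x ht) (fun x _ => hE' x)
        ((slice_cont hWθc ht).intervalIntegrable 0 T)
        ((continuous_const.mul hEcont).intervalIntegrable 0 T)
      rw [hWbc t ht, sub_self] at h1
      rw [intervalIntegral.integral_add (hint1 Wθ hWθc t ht) (hint2 W hWc t ht)] at h1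
      have h2 : (∫ x in (0:ℝ)..T, W (t,x) * (k * E x))
          = k * ∫ x in (0:ℝ)..T, W (t,x) * E x := by
        rw [← intervalIntegral.integral_const_mul]
        congr 1
        funext x
        ring
      rw [h2] at h1
      linear_combination h1
    have hbcU : ∀ x : ℝ, 0 < x → U (x, T) * E T = U (x, 0) * E 0 := by
      intro x hx
      have h := hper x 0 hx
      rw [zero_add] at h
      rw [hE0, mul_one, h, mul_comm c (U (x,0)), mul_assoc, hcET, mul_one]
    have hbcθ : ∀ x : ℝ, 0 < x → Uθ (x, T) * E T = Uθ (x, 0) * E 0 := by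
      intro x hx
      have h := hperθ x 0 hx
      rw [zero_add] at h
      rw [hE0, mul_one, h, mul_comm c (Uθ (x,0)), mul_assoc, hcET, mul_one]
    set g : ℝ → ℂ := fun t => ∫ x in (0:ℝ)..T, U (t,x) * E x with hgdef
    set g1 : ℝ → ℂ := fun t => ∫ x in (0:ℝ)..T, Ur (t,x) * E x with hg1def
    set g2 : ℝ → ℂ := fun t => ∫ x in (0:ℝ)..T, Urr (t,x) * E x with hg2def
    have hg : ∀ t ∈ Set.Ioi (0:ℝ), HasDerivAt g (g1 t) t := by
      intro t ht
      exact aux_param_deriv (F := fun p => U p * E p.2) (Fr := fun p => Ur p * E p.2)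
        (hU.continuousOn.mul ((hEcont.comp continuous_snd).continuousOn))
        (hUrC.continuousOn.mul ((hEcont.comp continuous_snd).continuousOn))
        (fun x s hx => (dU1 x s hx).mul_const (E s)) 0 T ht
    have hg1' : ∀ t ∈ Set.Ioi (0:ℝ), HasDerivAt g1 (g2 t) t := by
      intro t ht
      exact aux_param_deriv (F := fun p => Ur p * E p.2) (Fr := fun p => Urr p * E p.2)
        (hUrC.continuousOn.mul ((hEcont.comp continuous_snd).continuousOn))
        (hUrrC.continuousOn.mul ((hEcont.comp continuous_snd).continuousOn))
        (fun x s hx => (dU2 x s hx).mul_const (E s)) 0 T ht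
    have hI1 : ∀ t : ℝ, 0 < t → (∫ x in (0:ℝ)..T, Uθ (t,x) * E x) = -(k * g t) :=
      fun t ht => hIBP U Uθ hU.continuousOn hUθC.continuousOn
        (fun x s hx => dU3 x s hx) hbcU t ht
    have hI2 : ∀ t : ℝ, 0 < t → (∫ x in (0:ℝ)..T, Uθθ (t,x) * E x) = k^2 * g t := by
      intro t ht
      have h := hIBP Uθ Uθθ hUθC.continuousOn hUθθC.continuousOn
        (fun x s hx => dU4 x s hx) hbcθ t ht
      rw [hI1 t ht] at h
      rw [h]
      ring
    have heqf : ∀ t ∈ Set.Ioi (0:ℝ),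
        g2 t + ((t:ℂ))⁻¹ * g1 t - ((|lam|:ℝ):ℂ)^2 * (((t:ℂ))⁻¹)^2 * g t = 0 := by
      intro t ht
      have ht' : (0:ℝ) < t := ht
      have hsplit : g2 t + ((t:ℂ))⁻¹ * g1 t
          = ∫ x in (0:ℝ)..T, (Urr (t,x) * E x + ((t:ℂ))⁻¹ * (Ur (t,x) * E x)) := by
        rw [intervalIntegral.integral_add (hint1 Urr hUrrC.continuousOn t ht')
          ((hint1 Ur hUrC.continuousOn t ht').const_mul _),
          intervalIntegral.integral_const_mul]
      have hpt : ∀ x : ℝ, Urr (t,x) * E x + ((t:ℂ))⁻¹ * (Ur (t,x) * E x)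
          = (((t:ℂ))⁻¹)^2 * -(Uθθ (t,x) * E x) := by
        intro x
        have h := hPDE t x ht'
        linear_combination (E x) * h
      rw [hsplit]
      simp_rw [hpt]
      rw [intervalIntegral.integral_const_mul]
      have hneg : (∫ x in (0:ℝ)..T, -(Uθθ (t,x) * E x)) = -(k^2 * g t) := by
        rw [intervalIntegral.integral_neg, hI2 t ht']
      rw [hneg]
      have hk2 : k^2 = -(((lam:ℝ):ℂ))^2 := by
        rw [hkdef]
        have h5 : (-((lam:ℝ):ℂ) * Complex.I)^2 = ((lam:ℝ):ℂ)^2 * Complex.I^2 := by ring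
        rw [h5, Complex.I_sq]
        ring
      have habs : ((|lam|:ℝ):ℂ)^2 = (((lam:ℝ):ℂ))^2 := by
        rw [← Complex.ofReal_pow, ← Complex.ofReal_pow, sq_abs]
      rw [habs, hk2]
      ring
    have hgb : ∀ t : ℝ, 0 < t → ‖g t‖ ≤ (C*T) * t^(-μ) := by
      intro t ht
      have h1 : ∀ x ∈ Set.uIoc (0:ℝ) T, ‖U (t,x) * E x‖ ≤ C * t^(-μ) := by
        intro x hx
        rw [norm_mul, hEnorm x, mul_one]
        exact hbound t x ht
      have h2 := intervalIntegral.norm_integral_le_of_norm_le_const h1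
      rw [sub_zero, abs_of_pos hT] at h2
      calc ‖g t‖ ≤ C * t^(-μ) * T := h2
        _ = (C*T) * t^(-μ) := by ring
    have hgz : ∀ t : ℝ, 0 < t → g t = 0 := by
      rcases lam_min hβ hι_int hι_low hι_high n with hz | hge
      · have hlam0 : lam = 0 := hz
        have heq0 : ∀ t ∈ Set.Ioi (0:ℝ), g2 t + ((t:ℂ))⁻¹ * g1 t = 0 := by
          intro t ht
          have h := heqf t ht
          rw [hlam0] at h
          simpa using h
        obtain ⟨A, cc, hAc⟩ := ode_zero hg hg1' heq0
        obtain ⟨hA0, hc0⟩ := kill_zero hμ0 (C' := C*T) (fun s hs => by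
          rw [← hAc s hs]
          exact hgb s hs)
        intro t ht
        rw [hAc t ht, hA0, hc0]
        simp
      · have hν : μ < |lam| := lt_of_lt_of_le hμι hge
        obtain ⟨A, B, hAB⟩ := ode_pos (hμ0.trans hν) hg hg1' heqf
        obtain ⟨hA0, hB0⟩ := kill_pos hμ0 hν (fun s hs => by
          rw [← hAB s hs]
          exact hgb s hs)
        intro t ht
        rw [hAB t ht, hA0, hB0]
        simp
    intro t ht
    simp_rw [hEeq]
    exact hgz t ht
  -- conclude via Fourier series on the circle of circumference T
  intro r θ hr
  haveI : Fact (0 < T) := ⟨hT⟩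
  have hβC : ((β:ℝ):ℂ) ≠ 0 := by exact_mod_cast hβ0.ne'
  have hπC : ((Real.pi:ℝ):ℂ) ≠ 0 := by exact_mod_cast hπ.ne'
  have hfper : Function.Periodic
      (fun x : ℝ => U (r, x) * Complex.exp (-((σ/β:ℝ):ℂ) * (x:ℂ) * Complex.I)) T := by
    intro x
    simp only
    have hno : c * Complex.exp (-((σ/β:ℝ):ℂ) * ((T:ℝ):ℂ) * Complex.I) = 1 := by
      rw [hcdef, ← Complex.exp_add]
      have h0 : 2 * (Real.pi:ℂ) * Complex.I * (σ:ℂ)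
          + -((σ/β:ℝ):ℂ) * ((T:ℝ):ℂ) * Complex.I = 0 := by
        rw [hTdef]
        push_cast
        field_simp
        ring
      rw [h0, Complex.exp_zero]
    have hsplit : Complex.exp (-((σ/β:ℝ):ℂ) * (((x+T:ℝ)):ℂ) * Complex.I)
        = Complex.exp (-((σ/β:ℝ):ℂ) * (x:ℂ) * Complex.I)
          * Complex.exp (-((σ/β:ℝ):ℂ) * ((T:ℝ):ℂ) * Complex.I) := by
      rw [← Complex.exp_add]
      congr 1
      push_cast
      ring
    rw [hper r x hr, hsplit]
    linear_combination (U (r,x) * Complex.exp (-((σ/β:ℝ):ℂ) * (x:ℂ) * Complex.I)) * hno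
  set F : AddCircle T → ℂ := hfper.lift with hFdef
  have hfcont : Continuous (fun x : ℝ => U (r, x) * Complex.exp (-((σ/β:ℝ):ℂ) * (x:ℂ) * Complex.I)) := by
    apply (slice_cont hU.continuousOn hr).mul
    exact Complex.continuous_exp.comp
      ((continuous_const.mul Complex.continuous_ofReal).mul continuous_const)
  have hFcont : Continuous F := by
    rw [continuous_coinduced_dom]
    have heqF : (F ∘ (QuotientAddGroup.mk : ℝ → AddCircle T))
        = fun x : ℝ => U (r, x) * Complex.exp (-((σ/β:ℝ):ℂ) * (x:ℂ) * Complex.I) :=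
      funext fun x => hfper.lift_coe x
    exact heqF ▸ hfcont
  have hcoeff : ∀ m : ℤ, fourierCoeff F m = 0 := by
    intro m
    rw [fourierCoeff_eq_intervalIntegral F m 0]
    have hzint : (∫ x in (0:ℝ)..(0+T), @fourier T (-m) x • F x) = 0 := by
      rw [zero_add]
      have hptw : ∀ x : ℝ, @fourier T (-m) (x : AddCircle T) • F ((x : ℝ) : AddCircle T)
          = U (r, x) * Complex.exp (-(((((m:ℝ) + σ)/β : ℝ)):ℂ) * (x:ℂ) * Complex.I) := by
        intro x
        rw [smul_eq_mul]
        rw [show F ((x : ℝ) : AddCircle T)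
            = U (r, x) * Complex.exp (-((σ/β:ℝ):ℂ) * (x:ℂ) * Complex.I) from hfper.lift_coe x]
        rw [fourier_coe_apply]
        rw [mul_comm (Complex.exp _) (U (r, x) * Complex.exp _), mul_assoc, ← Complex.exp_add]
        congr 1
        congr 1
        rw [hTdef]
        push_cast
        field_simp
        ring
      simp_rw [hptw]
      exact key m r hr
    rw [hzint, smul_zero]
  have hFzero := fourier_zero_of_coeffs ⟨F, hFcont⟩ hcoeff
  have hfθ : U (r, θ) * Complex.exp (-((σ/β:ℝ):ℂ) * (θ:ℂ) * Complex.I) = 0 := by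
    rw [show U (r, θ) * Complex.exp (-((σ/β:ℝ):ℂ) * (θ:ℂ) * Complex.I)
        = F ((θ : ℝ) : AddCircle T) from (hfper.lift_coe θ).symm]
    simpa using hFzero ((θ : ℝ) : AddCircle T)
  rcases mul_eq_zero.mp hfθ with h | h
  · exact h
  · exact absurd h (Complex.exp_ne_zero _)
end

section
/- Let u be a real-valued harmonic function on ℝ² ∖ {0}, i.e. u is C² on ℝ² ∖ {0} and ∂²u/∂x₁² + ∂²u/∂x₂² = 0 there. Suppose there exists a constant C > 0 and an exponent μ ∈ (0,1) such that |u(x)| ≤ C·|x|^{−μ} for every x ∈ ℝ² ∖ {0}, where |x| is the Euclidean norm. Then u is identically zero on ℝ² ∖ {0}. -/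
/-- A real-valued function is harmonic on a set `s ⊆ ℝⁿ` if it is C² there and the sum of
its pure second partial derivatives (computed within `s`) vanishes at every point of `s`. -/
def IsHarmonicOnEuc {n : ℕ} (u : EuclideanSpace ℝ (Fin n) → ℝ)
    (s : Set (EuclideanSpace ℝ (Fin n))) : Prop :=
  ContDiffOn ℝ 2 u s ∧
    ∀ x ∈ s, ∑ i : Fin n, iteratedFDerivWithin ℝ 2 u s x
      ![EuclideanSpace.single i 1, EuclideanSpace.single i 1] = 0

open Complex Metric Set Filter Topology InnerProductSpace Asymptotics Laplacian

/-!
For a harmonic `u` on `ℂ ∖ {0}`, the function `f = u_x - i u_y` is holomorphic, and near each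
point `u` is the real part of a primitive of `f`. On the ball `B(z, |z|/2)` we have
`|u| ≤ 2^μ C |z|^(-μ)`, so Borel–Carathéodory together with the Cauchy estimate gives
`|z f(z)| ≤ K |z|^(-μ)`. Since `μ < 1`, `z f(z) = o(1/z)` at `0`, so `z f(z)` extends to an entire
function; since `μ > 0` it tends to `0` at infinity, hence vanishes by Liouville. Thus `du = 0` on
the connected set `ℂ ∖ {0}`, `u` is constant, and the decay of `u` forces the constant to be `0`.
-/

section Removable

variable {E : Type*} [NormedAddCommGroup E] {g : ℂ → E} {K μ : ℝ}

theorem isLittleO_inv_of_norm_le_rpow_neg (hμ : μ < 1)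
    (hg : ∀ z ≠ 0, ‖g z‖ ≤ K * ‖z‖ ^ (-μ)) : g =o[𝓝[≠] 0] fun z => z⁻¹ := by
  have hlim : Tendsto (fun z : ℂ => K * ‖z‖ ^ (1 - μ)) (𝓝[≠] 0) (𝓝 0) := by
    have := ((continuous_norm.tendsto (0 : ℂ)).rpow_const (p := 1 - μ)
      (Or.inr (by linarith))).const_mul K
    rw [norm_zero, Real.zero_rpow (by linarith), mul_zero] at this
    exact this.mono_left nhdsWithin_le_nhds
  refine isLittleO_iff.2 fun ε hε => ?_
  filter_upwards [hlim.eventually_le_const hε, self_mem_nhdsWithin] with z hz hz0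
  have hpos : 0 < ‖z‖ := norm_pos_iff.2 hz0
  calc ‖g z‖ ≤ K * ‖z‖ ^ (-μ) := hg z hz0
    _ = K * ‖z‖ ^ (1 - μ) * ‖z⁻¹‖ := by
      rw [norm_inv, mul_assoc, ← Real.rpow_neg_one, ← Real.rpow_add hpos]; ring_nf
    _ ≤ ε * ‖z⁻¹‖ := by gcongr

theorem tendsto_cocompact_of_norm_le_rpow_neg (hμ : 0 < μ)
    (hg : ∀ z ≠ 0, ‖g z‖ ≤ K * ‖z‖ ^ (-μ)) : Tendsto g (cocompact ℂ) (𝓝 0) := by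
  have hlim : Tendsto (fun z : ℂ => K * ‖z‖ ^ (-μ)) (cocompact ℂ) (𝓝 0) := by
    simpa using ((tendsto_rpow_neg_atTop hμ).comp tendsto_norm_cocompact_atTop).const_mul K
  refine squeeze_zero_norm' ?_ hlim
  filter_upwards [(isCompact_singleton (x := (0 : ℂ))).compl_mem_cocompact] with z hz
  exact hg z hz

variable [NormedSpace ℂ E] [CompleteSpace E]

theorem eq_zero_of_differentiableOn_compl_zero_of_norm_le_rpow_neg
    (hd : DifferentiableOn ℂ g {0}ᶜ) (hμ : μ ∈ Ioo 0 1)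
    (hg : ∀ z ≠ 0, ‖g z‖ ≤ K * ‖z‖ ^ (-μ)) {z : ℂ} (hz : z ≠ 0) : g z = 0 := by
  have ho : (fun w => g w - g 0) =o[𝓝[≠] 0] fun w => (w - 0)⁻¹ := by
    simp only [sub_zero]
    refine (isLittleO_inv_of_norm_le_rpow_neg hμ.2 hg).sub (isLittleO_const_left.2 (Or.inr ?_))
    simpa [Function.comp_def] using tendsto_norm_inv_nhdsNE_zero_atTop
  have hG : Differentiable ℂ (Function.update g 0 (limUnder (𝓝[≠] 0) g)) := by
    rw [← differentiableOn_univ]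
    exact differentiableOn_update_limUnder_of_isLittleO univ_mem
      (by rwa [← compl_eq_univ_sdiff]) ho
  have hlim : Tendsto (Function.update g 0 (limUnder (𝓝[≠] 0) g)) (cocompact ℂ) (𝓝 0) := by
    refine (tendsto_cocompact_of_norm_le_rpow_neg hμ.1 hg).congr' ?_
    filter_upwards [(isCompact_singleton (x := (0 : ℂ))).compl_mem_cocompact] with w hw
    exact (Function.update_of_ne hw _ _).symm
  simpa [Function.update_of_ne hz] using hG.apply_eq_of_tendsto_cocompact z hlim

end Removable

theorem norm_deriv_le_of_re_sub_le {F : ℂ → ℂ} {c : ℂ} {R M : ℝ} (hR : 0 < R) (hM : 0 < M)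
    (hF : DifferentiableOn ℂ F (ball c R)) (hre : ∀ z ∈ ball c R, (F z - F c).re ≤ M) :
    ‖deriv F c‖ ≤ 4 * M / R := by
  set G : ℂ → ℂ := fun w => F (c + w) - F c
  have hG : DifferentiableOn ℂ G (ball 0 R) := by
    refine (hF.comp (by fun_prop) fun w hw => ?_).sub_const _
    simpa [mem_ball, dist_eq_norm] using hw
  have hGre : MapsTo G (ball 0 R) {w | w.re ≤ M} := fun w hw =>
    hre _ (by simpa [mem_ball, dist_eq_norm] using hw)
  have hsphere : ∀ w ∈ sphere (0 : ℂ) (R / 2), ‖G w‖ ≤ 2 * M := by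
    intro w hw
    have hw' : ‖w‖ = R / 2 := by simpa using hw
    calc ‖G w‖ ≤ 2 * M * ‖w‖ / (R - ‖w‖) :=
          borelCaratheodory_zero (z := w) hM hG hGre hR (by simp [hw']; linarith) (by simp [G])
      _ = 2 * M := by rw [hw']; field_simp; ring
  have hcl : DiffContOnCl ℂ G (ball 0 (R / 2)) := by
    refine (hG.mono ?_).diffContOnCl
    rw [closure_ball _ (by positivity : R / 2 ≠ 0)]
    exact closedBall_subset_ball (by linarith)
  have hderiv : deriv G 0 = deriv F c := by
    simp [G, deriv_sub_const, deriv_comp_const_add]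
  calc ‖deriv F c‖ = ‖deriv G 0‖ := by rw [hderiv]
    _ ≤ 2 * M / (R / 2) := norm_deriv_le_of_forall_mem_sphere_norm_le (by positivity) hcl hsphere
    _ = 4 * M / R := by field_simp; ring

/-- Twice the Wirtinger derivative `∂u/∂z`. -/
noncomputable def complexPartial (u : ℂ → ℝ) (z : ℂ) : ℂ :=
  fderiv ℝ u z 1 - I * fderiv ℝ u z I

theorem HasDerivAt.complexPartial_re {F : ℂ → ℂ} {F' : ℂ} {z : ℂ} (hF : HasDerivAt F F' z) :
    complexPartial (fun w => (F w).re) z = F' := by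
  have h := (reCLM.hasFDerivAt.comp z (hF.hasFDerivAt.restrictScalars ℝ)).fderiv
  simp only [complexPartial, Function.comp_def, reCLM_apply] at h ⊢
  rw [h]
  apply Complex.ext <;> simp

theorem Filter.EventuallyEq.complexPartial_eq {u v : ℂ → ℝ} {z : ℂ} (h : u =ᶠ[𝓝 z] v) :
    complexPartial u z = complexPartial v z := by
  simp only [complexPartial, h.fderiv_eq]

theorem HarmonicOnNhd.norm_complexPartial_le {u : ℂ → ℝ} {c : ℂ} {R M : ℝ}
    (hu : HarmonicOnNhd u (ball c R)) (hR : 0 < R) (hM : 0 < M)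
    (hbound : ∀ z ∈ ball c R, |u z| ≤ M) :
    ‖complexPartial u c‖ ≤ 8 * M / R := by
  obtain ⟨F, hF, hFu⟩ := hu.exists_analyticOnNhd_ball_re_eq
  have hc : c ∈ ball c R := mem_ball_self hR
  have hloc : u =ᶠ[𝓝 c] fun z => (F z).re :=
    eventually_of_mem (isOpen_ball.mem_nhds hc) fun z hz => (hFu hz).symm
  have hpartial : complexPartial u c = deriv F c :=
    hloc.complexPartial_eq.trans (hF c hc).differentiableAt.hasDerivAt.complexPartial_re
  have hre : ∀ z ∈ ball c R, (F z - F c).re ≤ 2 * M := by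
    intro z hz
    have hz' : (F z).re = u z := hFu hz
    have hc' : (F c).re = u c := hFu hc
    rw [sub_re, hz', hc']
    linarith [abs_le.1 (hbound z hz), abs_le.1 (hbound c hc)]
  calc ‖complexPartial u c‖ = ‖deriv F c‖ := by rw [hpartial]
    _ ≤ 4 * (2 * M) / R := norm_deriv_le_of_re_sub_le hR (by positivity) hF.differentiableOn hre
    _ = 8 * M / R := by ring

theorem fderiv_eq_zero_of_complexPartial_eq_zero {u : ℂ → ℝ} {z : ℂ}
    (h : complexPartial u z = 0) : fderiv ℝ u z = 0 := by
  have h1 : fderiv ℝ u z 1 = 0 := by simpa [complexPartial] using congrArg re h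
  have hI : fderiv ℝ u z I = 0 := by simpa [complexPartial] using congrArg im h
  ext w
  have hw : w = w.re • (1 : ℂ) + w.im • I := by simp
  rw [hw, map_add, map_smul, map_smul, h1, hI]
  simp

section Decay

variable {u : ℂ → ℝ} {C μ : ℝ}

theorem HarmonicOnNhd.norm_mul_complexPartial_le (hu : HarmonicOnNhd u {0}ᶜ) (hC : 0 < C)
    (hμ : 0 ≤ μ) (hbound : ∀ z ≠ 0, |u z| ≤ C * ‖z‖ ^ (-μ)) {z : ℂ} (hz : z ≠ 0) :
    ‖z * complexPartial u z‖ ≤ 16 * 2 ^ μ * C * ‖z‖ ^ (-μ) := by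
  have hr : 0 < ‖z‖ / 2 := by positivity
  have hfar : ∀ w ∈ ball z (‖z‖ / 2), ‖z‖ / 2 ≤ ‖w‖ := fun w hw => by
    rw [mem_ball, dist_eq_norm] at hw
    linarith [norm_sub_norm_le z w, norm_sub_rev z w]
  have hball : ball z (‖z‖ / 2) ⊆ {0}ᶜ := fun w hw hw0 => by
    have := hfar w hw
    rw [mem_singleton_iff.1 hw0, norm_zero] at this
    linarith
  have hgrad := HarmonicOnNhd.norm_complexPartial_le (hu.mono hball) hr
    (by positivity : 0 < C * (‖z‖ / 2) ^ (-μ)) fun w hw =>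
      (hbound w (hball hw)).trans <| mul_le_mul_of_nonneg_left
        (Real.rpow_le_rpow_of_nonpos hr (hfar w hw) (neg_nonpos.2 hμ)) hC.le
  calc ‖z * complexPartial u z‖ ≤ ‖z‖ * (8 * (C * (‖z‖ / 2) ^ (-μ)) / (‖z‖ / 2)) := by
        rw [norm_mul]; gcongr
    _ = 16 * 2 ^ μ * C * ‖z‖ ^ (-μ) := by
        rw [Real.div_rpow (norm_nonneg z) zero_le_two, Real.rpow_neg zero_le_two]
        field_simp
        norm_num

theorem HarmonicOnNhd.eq_zero_of_abs_le_rpow_neg (hu : HarmonicOnNhd u {0}ᶜ) (hC : 0 < C)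
    (hμ : μ ∈ Ioo 0 1) (hbound : ∀ z ≠ 0, |u z| ≤ C * ‖z‖ ^ (-μ)) {z : ℂ} (hz : z ≠ 0) :
    u z = 0 := by
  have hmul : ∀ w ≠ 0, w * complexPartial u w = 0 := fun w hw =>
    eq_zero_of_differentiableOn_compl_zero_of_norm_le_rpow_neg
      (fun v hv => (differentiableAt_id.mul
        (HarmonicAt.differentiableAt_complex_partial (hu v hv))).differentiableWithinAt) hμ
      (fun v hv => HarmonicOnNhd.norm_mul_complexPartial_le hu hC hμ.1.le hbound hv) hw
  have hfderiv : EqOn (fderiv ℝ u) 0 {0}ᶜ := fun w hw =>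
    fderiv_eq_zero_of_complexPartial_eq_zero ((mul_eq_zero.1 (hmul w hw)).resolve_left hw)
  obtain ⟨a, ha⟩ := isOpen_compl_singleton.exists_is_const_of_fderiv_eq_zero
    (isConnected_compl_singleton_of_one_lt_rank (by simp) 0).isPreconnected
    (hu.contDiffOn.differentiableOn two_ne_zero) hfderiv
  suffices |a| ≤ 0 by rw [ha z hz]; exact abs_nonpos_iff.1 this
  refine ge_of_tendsto (by simpa using (tendsto_rpow_neg_atTop hμ.1).const_mul C) ?_
  filter_upwards [eventually_gt_atTop 0] with r hr
  have hr0 : (r : ℂ) ≠ 0 := by exact_mod_cast hr.ne'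
  simpa [ha r hr0, abs_of_pos hr] using hbound r hr0

end Decay

section Transfer

variable {E E' F : Type*} [NormedAddCommGroup E] [InnerProductSpace ℝ E] [FiniteDimensional ℝ E]
  [NormedAddCommGroup E'] [InnerProductSpace ℝ E'] [FiniteDimensional ℝ E']
  [NormedAddCommGroup F] [NormedSpace ℝ F]

theorem laplacian_comp_linearIsometryEquiv (f : E → F) (e : E' ≃ₗᵢ[ℝ] E) (x : E') :
    Δ (f ∘ e) x = Δ f (e x) := by
  have h := e.toContinuousLinearEquiv.iteratedFDerivWithin_comp_right f uniqueDiffOn_univ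
    (mem_univ (e x)) 2
  simp only [preimage_univ, iteratedFDerivWithin_univ,
    LinearIsometryEquiv.coe_toContinuousLinearEquiv] at h
  rw [laplacian_eq_iteratedFDeriv_stdOrthonormalBasis,
    laplacian_eq_iteratedFDeriv_orthonormalBasis f ((stdOrthonormalBasis ℝ E').map e)]
  refine Finset.sum_congr rfl fun i _ => ?_
  simp only [h, ContinuousMultilinearMap.compContinuousLinearMap_apply, OrthonormalBasis.map_apply]
  congr 1
  ext j
  fin_cases j <;> rfl

theorem HarmonicAt.comp_linearIsometryEquiv {f : E → F} (e : E' ≃ₗᵢ[ℝ] E) {x : E'}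
    (hf : HarmonicAt f (e x)) : HarmonicAt (f ∘ e) x := by
  refine ⟨hf.1.comp x e.contDiff.contDiffAt, ?_⟩
  have h : Δ (f ∘ e) = Δ f ∘ e := funext (laplacian_comp_linearIsometryEquiv f e)
  rw [h]
  exact hf.2.comp_tendsto e.continuous.continuousAt

end Transfer

theorem IsHarmonicOnEuc.harmonicOnNhd {n : ℕ} {u : EuclideanSpace ℝ (Fin n) → ℝ}
    {s : Set (EuclideanSpace ℝ (Fin n))} (hs : IsOpen s) (hu : IsHarmonicOnEuc u s) :
    HarmonicOnNhd u s := by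
  intro x hx
  refine ⟨hu.1.contDiffAt (hs.mem_nhds hx), ?_⟩
  filter_upwards [hs.mem_nhds hx] with y hy
  rw [laplacian_eq_iteratedFDeriv_orthonormalBasis u (EuclideanSpace.basisFun (Fin n) ℝ)]
  simpa [iteratedFDerivWithin_of_isOpen 2 hs hy] using hu.2 y hy

/-- A harmonic function u on ℝ² ∖ {0} satisfying |u(x)| ≤ C·|x|^{−μ}
for some C > 0 and μ ∈ (0,1) must vanish identically on ℝ² ∖ {0}. -/
theorem stmt_6 (u : EuclideanSpace ℝ (Fin 2) → ℝ)
    (hu : IsHarmonicOnEuc u ({0}ᶜ : Set (EuclideanSpace ℝ (Fin 2))))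
    (C : ℝ) (hC : 0 < C) (μ : ℝ) (hμ : μ ∈ Set.Ioo (0 : ℝ) 1)
    (hbound : ∀ x : EuclideanSpace ℝ (Fin 2), x ≠ 0 → |u x| ≤ C * ‖x‖ ^ (-μ)) :
    ∀ x : EuclideanSpace ℝ (Fin 2), x ≠ 0 → u x = 0 := by
  set e := Complex.orthonormalBasisOneI.repr
  have hU : HarmonicOnNhd (u ∘ e) {0}ᶜ := fun z hz =>
    HarmonicAt.comp_linearIsometryEquiv e (hu.harmonicOnNhd isOpen_compl_singleton (e z)
      (by simpa using hz))
  intro x hx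
  simpa using HarmonicOnNhd.eq_zero_of_abs_le_rpow_neg hU hC hμ
    (fun z hz => by simpa using hbound (e z) (by simpa using hz)) (z := e.symm x)
    (by simpa using hx)
end

section
/- Let 𝔄 and 𝔅 be Banach spaces and let 𝓕 : 𝔄 → 𝔅 be a map of the form 𝓕(x) − 𝓕(0) = 𝓛(x) + 𝓝(x), where 𝓛 : 𝔄 → 𝔅 is a continuous linear isomorphism with continuous inverse satisfying ‖𝓛⁻¹‖ ≤ C₁, and 𝓝 : 𝔄 → 𝔅 satisfies 𝓝(0) = 0. Assume there exist constants r > 0 and C₂ > 0 with r < 1/(5·C₁·C₂) such that (a) ‖𝓝(x) − 𝓝(y)‖ ≤ C₂·(‖x‖ + ‖y‖)·‖x − y‖ for all x, y in the open ball B_r(0) ⊂ 𝔄, and (b) ‖𝓕(0)‖ ≤ r/(2·C₁). Then there exists a solution x ∈ B_r(0) of 𝓕(x) = 0 with ‖x‖ ≤ 2·C₁·‖𝓕(0)‖, and this solution is the unique solution of 𝓕(x) = 0 in B_r(0). -/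
/-!
Write `F = F 0 + L + N`. On `B_r(0)` the remainder `N` is Lipschitz with constant `2 C₂ r`, so `F`
approximates `L` there with a constant `c` satisfying `c C₁ < 2/5`. The standard contraction
argument behind the inverse function theorem then shows that `F` maps a closed ball of radius
`ε < r` around `0` onto the closed ball of radius `(C₁⁻¹ - c) ε` around `F 0`, which contains `0`
once `ε` is a suitable multiple of `C₁ ‖F 0‖`; and `c C₁ < 1` makes `F` injective on `B_r(0)`.
-/

open Metric Set

namespace ApproximatesLinearOn

variable {𝕜 E F : Type*} [NontriviallyNormedField 𝕜] [NormedAddCommGroup E] [NormedSpace 𝕜 E]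
  [NormedAddCommGroup F] [NormedSpace 𝕜 F] {f : E → F} {f' : E ≃L[𝕜] F} {c : NNReal} {C : ℝ}

theorem injOn_of_norm_symm_le {s : Set E} (hf : ApproximatesLinearOn f (f' : E →L[𝕜] F) s c)
    (hC : ‖(f'.symm : F →L[𝕜] E)‖ ≤ C) (hcC : c * C < 1) : InjOn f s := by
  refine hf.injOn ?_
  -- `0⁻¹ = 0` in `ℝ≥0`, so the case `f'.symm = 0` (only possible for trivial `E`) is separate.
  rcases eq_or_ne ‖(f'.symm : F →L[𝕜] E)‖₊ 0 with h0 | h0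
  · refine Or.inl ⟨fun x y => ?_⟩
    have hsymm : (f'.symm : F →L[𝕜] E) = 0 := nnnorm_eq_zero.1 h0
    rw [← f'.symm_apply_apply x, ← f'.symm_apply_apply y, ← ContinuousLinearEquiv.coe_coe f'.symm,
      hsymm]
    rfl
  · refine Or.inr ((NNReal.lt_inv_iff_mul_lt h0).2 ?_)
    rw [← NNReal.coe_lt_coe, NNReal.coe_mul, coe_nnnorm, NNReal.coe_one]
    exact (mul_le_mul_of_nonneg_left hC c.2).trans_lt hcC

theorem exists_apply_eq_of_norm_symm_le [CompleteSpace E] {b : E} {ε : ℝ}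
    (hf : ApproximatesLinearOn f (f' : E →L[𝕜] F) (closedBall b ε) c)
    (hC : ‖(f'.symm : F →L[𝕜] E)‖ ≤ C) (hε : 0 ≤ ε) {y : F}
    (hy : dist y (f b) ≤ (C⁻¹ - c) * ε) : ∃ x ∈ closedBall b ε, f x = y :=
  hf.surjOn_closedBall_of_nonlinearRightInverse
    { toFun := f'.symm
      nnnorm := ⟨C, (norm_nonneg _).trans hC⟩
      bound' := fun y => (f'.symm : F →L[𝕜] E).le_of_opNorm_le hC y
      right_inv' := f'.apply_symm_apply } hε subset_rfl hy

end ApproximatesLinearOn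

theorem approximatesLinearOn_ball_zero_of_norm_sub_sub_le {𝕜 E F : Type*}
    [NontriviallyNormedField 𝕜] [NormedAddCommGroup E] [NormedSpace 𝕜 E]
    [NormedAddCommGroup F] [NormedSpace 𝕜 F] {f : E → F} {f' : E →L[𝕜] F} {C r : ℝ} (hC : 0 ≤ C)
    (h : ∀ x ∈ ball (0 : E) r, ∀ y ∈ ball (0 : E) r,
      ‖f x - f y - f' (x - y)‖ ≤ C * (‖x‖ + ‖y‖) * ‖x - y‖) :
    ApproximatesLinearOn f f' (ball 0 r) (2 * C * r).toNNReal := by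
  intro x hx y hy
  rw [mem_ball_zero_iff] at hx hy
  calc ‖f x - f y - f' (x - y)‖ ≤ C * (‖x‖ + ‖y‖) * ‖x - y‖ := h x (by simpa) y (by simpa)
    _ ≤ 2 * C * r * ‖x - y‖ := mul_le_mul_of_nonneg_right (by nlinarith) (norm_nonneg _)
    _ ≤ (2 * C * r).toNNReal * ‖x - y‖ := by gcongr; exact Real.le_coe_toNNReal _

theorem stmt_10_general {A B : Type*}
    [NormedAddCommGroup A] [NormedSpace ℝ A] [CompleteSpace A]
    [NormedAddCommGroup B] [NormedSpace ℝ B]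
    (F N : A → B) (L : A ≃L[ℝ] B) (C₁ C₂ r : ℝ)
    (hL : ‖(L.symm : B →L[ℝ] A)‖ ≤ C₁)
    (hdecomp : ∀ x : A, F x - F 0 = L x + N x)
    (hr : 0 < r) (hC₂ : 0 < C₂) (hrC : r < 1 / (5 * C₁ * C₂))
    (ha : ∀ x ∈ Metric.ball (0 : A) r, ∀ y ∈ Metric.ball (0 : A) r,
      ‖N x - N y‖ ≤ C₂ * (‖x‖ + ‖y‖) * ‖x - y‖)
    (hb : ‖F 0‖ ≤ r / (2 * C₁)) :
    ∃ x ∈ Metric.ball (0 : A) r, F x = 0 ∧ ‖x‖ ≤ 2 * C₁ * ‖F 0‖ ∧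
      ∀ y ∈ Metric.ball (0 : A) r, F y = 0 → y = x := by
  have h5 : 0 < 5 * C₁ * C₂ := one_div_pos.1 (hr.trans hrC)
  have hC₁ : 0 < C₁ := by nlinarith
  have hsmall : 2 * C₂ * r * C₁ < 2 / 5 := by
    have := (lt_div_iff₀ h5).1 hrC; nlinarith
  have hF0 : C₁ * ‖F 0‖ ≤ r / 2 := by
    have := (le_div_iff₀ (by positivity)).1 hb; linarith
  have hF : ApproximatesLinearOn F (L : A →L[ℝ] B) (ball 0 r) (2 * C₂ * r).toNNReal :=
    approximatesLinearOn_ball_zero_of_norm_sub_sub_le hC₂.le fun x hx y hy => by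
      have hrem : F x - F y - L (x - y) = N x - N y := by
        rw [map_sub, show F x - F y = (F x - F 0) - (F y - F 0) by abel, hdecomp, hdecomp]
        abel
      exact hrem ▸ ha x hx y hy
  have hc : ((2 * C₂ * r).toNNReal : ℝ) = 2 * C₂ * r := Real.coe_toNNReal _ (by positivity)
  -- `C₁⁻¹ - 2 C₂ r > 3 / (5 C₁)`, so this radius reaches `0` from `F 0`; it is `< r` by `hb`.
  set ε := 5 / 3 * (C₁ * ‖F 0‖) with hε
  have hεr : ε < r := by linarith
  obtain ⟨x, hxε, hFx⟩ := (hF.mono_set (closedBall_subset_ball hεr)).exists_apply_eq_of_norm_symm_le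
    hL (by positivity) (y := 0) (by
      rw [dist_zero_left, hc, show (C₁⁻¹ - 2 * C₂ * r) * ε = (1 - 2 * C₂ * r * C₁) * (5 / 3 * ‖F 0‖)
        by field_simp; ring]
      nlinarith [norm_nonneg (F 0)])
  have hx : ‖x‖ ≤ ε := mem_closedBall_zero_iff.1 hxε
  refine ⟨x, mem_ball_zero_iff.2 (hx.trans_lt hεr), hFx, by nlinarith [norm_nonneg (F 0)], ?_⟩
  intro y hy hFy
  exact hF.injOn_of_norm_symm_le hL (by rw [hc]; linarith) hy (mem_ball_zero_iff.2 (hx.trans_lt hεr))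
    (hFy.trans hFx.symm)

/-- **quantitative implicit function theorem.** Let 𝓕 : 𝔄 → 𝔅 be a map
between Banach spaces with 𝓕(x) − 𝓕(0) = 𝓛(x) + 𝓝(x), where 𝓛 is a continuous linear
isomorphism with ‖𝓛⁻¹‖ ≤ C₁ and 𝓝(0) = 0. If for some r > 0, C₂ > 0 with
r < 1/(5C₁C₂) one has ‖𝓝(x) − 𝓝(y)‖ ≤ C₂(‖x‖+‖y‖)‖x−y‖ on B_r(0) and
‖𝓕(0)‖ ≤ r/(2C₁), then 𝓕 has a zero x in B_r(0) with ‖x‖ ≤ 2C₁‖𝓕(0)‖, and this zero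
is the unique zero of 𝓕 in B_r(0). -/
theorem stmt_10 {A B : Type*}
    [NormedAddCommGroup A] [NormedSpace ℝ A] [CompleteSpace A]
    [NormedAddCommGroup B] [NormedSpace ℝ B] [CompleteSpace B]
    (F N : A → B) (L : A ≃L[ℝ] B) (C₁ C₂ r : ℝ)
    (hL : ‖(L.symm : B →L[ℝ] A)‖ ≤ C₁)
    (hdecomp : ∀ x : A, F x - F 0 = L x + N x)
    (hN0 : N 0 = 0)
    (hr : 0 < r) (hC₂ : 0 < C₂) (hrC : r < 1 / (5 * C₁ * C₂))
    (ha : ∀ x ∈ Metric.ball (0 : A) r, ∀ y ∈ Metric.ball (0 : A) r,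
      ‖N x - N y‖ ≤ C₂ * (‖x‖ + ‖y‖) * ‖x - y‖)
    (hb : ‖F 0‖ ≤ r / (2 * C₁)) :
    ∃ x ∈ Metric.ball (0 : A) r, F x = 0 ∧ ‖x‖ ≤ 2 * C₁ * ‖F 0‖ ∧
      ∀ y ∈ Metric.ball (0 : A) r, F y = 0 → y = x :=
  stmt_10_general F N L C₁ C₂ r hL hdecomp hr hC₂ hrC ha hb
end
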